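/- Let G be a group acting on a type X, let x₀ ∈ X be a point fixed by every element of G, let n ≥ 1, and let Δ be a subgroup of G × Σₙ. Then the set fixedPoints Δ (Fin n → X) of Δ-fixed points equals the singleton consisting of the constant function at x₀ if and only if, for every i : Fin n, the set fixedPoints (π(Δᵢ)) X of π(Δᵢ)-fixed points of X equals {x₀}. -/

import Mathlib

open MulAction

variable {G X : Type*} [Group G] [MulAction G X] {n : ℕ}

/-- The action of `G × Σₙ` on `Fin n → X` by `((g, σ) • f) i = g • f (σ⁻¹ i)`. -/
instance prodPermMulAction : MulAction (G × Equiv.Perm (Fin n)) (Fin n → X) where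
  smul := fun gs f i => gs.1 • f (gs.2⁻¹ i)
  one_smul f := by
    funext i
    show (1 : G) • f ((1 : Equiv.Perm (Fin n))⁻¹ i) = f i
    simp
  mul_smul a b f := by
    funext i
    show (a.1 * b.1) • f ((a.2 * b.2)⁻¹ i) = a.1 • b.1 • f (b.2⁻¹ (a.2⁻¹ i))
    rw [mul_smul, mul_inv_rev, Equiv.Perm.mul_apply]

/-- The stabilizer subgroup `Δᵢ = {δ ∈ Δ : p(δ) i = i}` of a subgroup
`Δ ≤ G × Σₙ`. -/
def stab (Δ : Subgroup (G × Equiv.Perm (Fin n))) (i : Fin n) :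
    Subgroup (G × Equiv.Perm (Fin n)) where
  carrier := {x | x ∈ Δ ∧ x.2 i = i}
  one_mem' := ⟨Δ.one_mem, rfl⟩
  mul_mem' := by
    rintro a b ⟨haΔ, ha⟩ ⟨hbΔ, hb⟩
    exact ⟨Δ.mul_mem haΔ hbΔ, by simp [Equiv.Perm.mul_apply, hb, ha]⟩
  inv_mem' := by
    rintro a ⟨haΔ, ha⟩
    exact ⟨Δ.inv_mem haΔ, by simpa using Equiv.Perm.inv_eq_iff_eq.mpr ha.symm⟩

theorem fixedPoints_eq_singleton_iff (x₀ : X) (hx₀ : ∀ g : G, g • x₀ = x₀)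
    (hn : 1 ≤ n) (Δ : Subgroup (G × Equiv.Perm (Fin n))) :
    fixedPoints Δ (Fin n → X) = {fun _ => x₀} ↔
      ∀ i : Fin n,
        fixedPoints ((stab Δ i).map (MonoidHom.fst G (Equiv.Perm (Fin n)))) X = {x₀} := by
  classical
  have smul_apply : ∀ (δ : G × Equiv.Perm (Fin n)) (f : Fin n → X) (j : Fin n),
      (δ • f) j = δ.1 • f (δ.2⁻¹ j) := fun _ _ _ => rfl
  have smul_apply' : ∀ {Γ : Subgroup (G × Equiv.Perm (Fin n))} (δ : Γ) (f : Fin n → X)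
      (j : Fin n), (δ • f) j = (δ : G × Equiv.Perm (Fin n)).1 •
        f ((δ : G × Equiv.Perm (Fin n)).2⁻¹ j) := fun _ _ _ => rfl
  constructor
  · intro hΔ i
    ext x
    simp only [Set.mem_singleton_iff]
    constructor
    · intro hx
      have hfix : ∀ δ : G × Equiv.Perm (Fin n), δ ∈ stab Δ i → δ.1 • x = x := by
        intro δ hδ
        exact hx (⟨δ.1, Subgroup.mem_map.mpr ⟨δ, hδ, rfl⟩⟩ :
          (stab Δ i).map (MonoidHom.fst G (Equiv.Perm (Fin n))))
      set f : Fin n → X := fun j =>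
        if h : ∃ δ : G × Equiv.Perm (Fin n), δ ∈ Δ ∧ δ.2 i = j then h.choose.1 • x else x₀
        with hf
      have key : ∀ g : G × Equiv.Perm (Fin n), g ∈ Δ → ∀ j, g.2 i = j → f j = g.1 • x := by
        intro g hg j hj
        have h : ∃ δ : G × Equiv.Perm (Fin n), δ ∈ Δ ∧ δ.2 i = j := ⟨g, hg, hj⟩
        obtain ⟨hcΔ, hc2⟩ := h.choose_spec
        have hmem : g⁻¹ * h.choose ∈ stab Δ i := by
          refine ⟨Δ.mul_mem (Δ.inv_mem hg) hcΔ, ?_⟩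
          show g.2⁻¹ (h.choose.2 i) = i
          rw [hc2, ← hj, ← Equiv.Perm.mul_apply, inv_mul_cancel, Equiv.Perm.one_apply]
        have := hfix _ hmem
        simp only [Prod.fst_mul, Prod.fst_inv, mul_smul] at this
        have : h.choose.1 • x = g.1 • x := by
          have := congrArg (fun y => g.1 • y) this
          simpa [smul_smul] using this
        simp only [hf, dif_pos h, this]
      have hfΔ : f ∈ fixedPoints Δ (Fin n → X) := by
        intro δ
        funext j
        rw [smul_apply']
        by_cases h : ∃ g : G × Equiv.Perm (Fin n), g ∈ Δ ∧ g.2 i = (δ : G × Equiv.Perm (Fin n)).2⁻¹ j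
        · obtain ⟨g, hg, hgj⟩ := h
          rw [key g hg _ hgj, key ((δ : G × Equiv.Perm (Fin n)) * g) (Δ.mul_mem δ.2 hg) j
            (by show (δ : G × Equiv.Perm (Fin n)).2 (g.2 i) = j
                rw [hgj, ← Equiv.Perm.mul_apply, mul_inv_cancel, Equiv.Perm.one_apply])]
          simp [mul_smul]
        · have h' : ¬ ∃ g : G × Equiv.Perm (Fin n), g ∈ Δ ∧ g.2 i = j := by
            rintro ⟨g, hg, hgj⟩
            exact h ⟨(δ : G × Equiv.Perm (Fin n))⁻¹ * g,
              Δ.mul_mem (Δ.inv_mem δ.2) hg, by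
                show (δ : G × Equiv.Perm (Fin n)).2⁻¹ (g.2 i) = _
                rw [hgj]⟩
          simp only [hf, dif_neg h, dif_neg h', hx₀]
      have hfeq : f = fun _ => x₀ := by
        have := hΔ ▸ hfΔ
        simpa using this
      have : f i = x := key 1 Δ.one_mem i rfl |>.trans (one_smul G x)
      rw [hfeq] at this
      exact this.symm
    · rintro rfl
      intro m
      obtain ⟨g, hg, hg1⟩ := Subgroup.mem_map.mp m.2
      exact hx₀ _
  · intro h
    ext f
    simp only [Set.mem_singleton_iff]
    constructor
    · intro hf
      funext i
      have hmem : f i ∈ fixedPoints ((stab Δ i).map (MonoidHom.fst G (Equiv.Perm (Fin n)))) X := by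
        intro m
        obtain ⟨δ, hδ, hδ1⟩ := Subgroup.mem_map.mp m.2
        show (m : G) • f i = f i
        rw [← hδ1]
        have := congrFun (hf (⟨δ, hδ.1⟩ : Δ)) i
        rw [smul_apply'] at this
        have h2 : (δ.2)⁻¹ i = i := by
          rw [Equiv.Perm.inv_eq_iff_eq] at *
          exact hδ.2.symm
        rwa [h2] at this
      rw [h i] at hmem
      exact hmem
    · rintro rfl
      intro δ
      funext j
      rw [smul_apply']
      exact hx₀ _
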